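/- arXiv:1709.01774 — 2 statements merged into one kernel-verified Lean document; each statement's English description precedes it below -/
import Mathlib

section
/- Let (X,𝓑,m) be a σ-finite positive measure space and a_1,…,a_N, b_1,…,b_N : X → ℂ be 𝓑-measurable functions; define f(λ,x) = (1 + ∑_{n=1}^N a_n(x)λⁿ)/(1 + ∑_{n=1}^N b_n(x)λⁿ). Then the set Λ_f = {λ ∈ ℂ : m({x ∈ X : f(λ,x) = 0}) > 0} is countable. -/
/-!
For fixed `x`, `f(·, x)` vanishes only at roots of the product of its numerator and denominator,
a nonzero polynomial of degree at most `2N`, so every `x` lies in at most `2N` of the sets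
`A c = {x | f(c, x) = 0}`. Against a finite measure this bounded multiplicity gives
`∑' c, m (A c) ≤ 2N · m univ < ∞`, so only countably many terms are positive;
a σ-finite measure is a countable sum of finite ones.
-/

open MeasureTheory ENNReal Polynomial

namespace MeasureTheory

variable {α ι : Type*} [MeasurableSpace α] {A : ι → Set α} {M : ℕ}

theorem sum_measure_le_of_encard_le (μ : Measure α) (hA : ∀ i, MeasurableSet (A i))
    (hM : ∀ x, {i | x ∈ A i}.encard ≤ M) (F : Finset ι) :
    ∑ i ∈ F, μ (A i) ≤ M * μ Set.univ := by
  classical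
  have hcard (x : α) : ∑ i ∈ F, (A i).indicator 1 x ≤ (M : ℝ≥0∞) := by
    have hsub : (F.filter (x ∈ A ·) : Set ι) ⊆ {i | x ∈ A i} :=
      fun i hi => (Finset.mem_filter.1 hi).2
    have hle := (Set.encard_le_encard hsub).trans (hM x)
    rw [Set.encard_coe_eq_coe_finsetCard, Nat.cast_le] at hle
    simpa [Set.indicator_apply] using hle
  calc ∑ i ∈ F, μ (A i) = ∫⁻ x, ∑ i ∈ F, (A i).indicator 1 x ∂μ := by
        rw [lintegral_finsetSum _ fun i _ => measurable_one.indicator (hA i)]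
        simp_rw [lintegral_indicator_one (hA _)]
    _ ≤ ∫⁻ _, (M : ℝ≥0∞) ∂μ := lintegral_mono hcard
    _ = M * μ Set.univ := lintegral_const _

theorem tsum_measure_le_of_encard_le (μ : Measure α) (hA : ∀ i, MeasurableSet (A i))
    (hM : ∀ x, {i | x ∈ A i}.encard ≤ M) :
    ∑' i, μ (A i) ≤ M * μ Set.univ := by
  rw [ENNReal.tsum_eq_iSup_sum]
  exact iSup_le (sum_measure_le_of_encard_le μ hA hM)

theorem Measure.countable_meas_pos_of_encard_le {μ : Measure α} [SFinite μ]
    (hA : ∀ i, MeasurableSet (A i)) (hM : ∀ x, {i | x ∈ A i}.encard ≤ M) :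
    {i | 0 < μ (A i)}.Countable := by
  have hcover : {i | 0 < μ (A i)} ⊆ ⋃ n, Function.support fun i => sfiniteSeq μ n (A i) := by
    intro i hi
    rw [Set.mem_ofPred_eq, ← sum_sfiniteSeq μ, Measure.sum_apply _ (hA i)] at hi
    simpa [pos_iff_ne_zero, ENNReal.tsum_eq_zero] using hi
  refine (Set.countable_iUnion fun n => ?_).mono hcover
  have hfin : (M : ℝ≥0∞) * sfiniteSeq μ n Set.univ ≠ ∞ :=
    mul_ne_top (natCast_ne_top M) (measure_ne_top _ _)
  exact Summable.countable_support_ennreal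
    (ne_top_of_le_ne_top hfin (tsum_measure_le_of_encard_le _ hA hM))

end MeasureTheory

namespace Polynomial

theorem encard_setOf_isRoot_le {R : Type*} [CommRing R] [IsDomain R] {p : R[X]} (hp : p ≠ 0) :
    {c | p.IsRoot c}.encard ≤ p.natDegree := by
  classical
  have hroots : {c | p.IsRoot c} = (p.roots.toFinset : Set R) := by
    ext c; simp [hp]
  rw [hroots, Set.encard_coe_eq_coe_finsetCard, Nat.cast_le]
  exact (Multiset.toFinset_card_le _).trans (card_roots' p)

theorem encard_setOf_eval_div_eval_eq_zero_le {K : Type*} [Field K] {p q : K[X]}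
    (hp : p ≠ 0) (hq : q ≠ 0) :
    {c | p.eval c / q.eval c = 0}.encard ≤ (p.natDegree + q.natDegree : ℕ) := by
  have hzeros : {c | p.eval c / q.eval c = 0} = {c | (p * q).IsRoot c} := by
    ext c; simp
  rw [hzeros, ← natDegree_mul hp hq]
  exact encard_setOf_isRoot_le (mul_ne_zero hp hq)

variable {R : Type*} [CommSemiring R] {N : ℕ}

noncomputable def oneAddMonomials (a : Fin N → R) : R[X] :=
  1 + ∑ i : Fin N, C (a i) * X ^ ((i : ℕ) + 1)

@[simp]
theorem eval_oneAddMonomials (a : Fin N → R) (c : R) :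
    (oneAddMonomials a).eval c = 1 + ∑ i : Fin N, a i * c ^ ((i : ℕ) + 1) := by
  simp [oneAddMonomials, eval_finsetSum]

theorem oneAddMonomials_ne_zero [Nontrivial R] (a : Fin N → R) : oneAddMonomials a ≠ 0 := by
  intro h
  simpa [h] using eval_oneAddMonomials a 0

theorem natDegree_oneAddMonomials_le (a : Fin N → R) : (oneAddMonomials a).natDegree ≤ N := by
  refine (natDegree_add_le _ _).trans (max_le (by simp) ?_)
  exact natDegree_sum_le_of_forall_le _ _ fun i _ => (natDegree_C_mul_X_pow_le _ _).trans i.2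

end Polynomial

/-- Let `(X, 𝓑, m)` be a σ-finite measure space and
`a_1, …, a_N, b_1, …, b_N : X → ℂ` measurable functions.  For
`f(c, x) = (1 + ∑_{n=1}^N a_n(x) cⁿ) / (1 + ∑_{n=1}^N b_n(x) cⁿ)`, the set
`Λ_f = {c ∈ ℂ : m {x : f(c,x) = 0} > 0}` is countable. -/
theorem countable_zero_measure_set
    {X : Type*} [MeasurableSpace X] (m : Measure X) [SigmaFinite m]
    (N : ℕ) (a b : Fin N → X → ℂ)
    (ha : ∀ i, Measurable (a i)) (hb : ∀ i, Measurable (b i)) :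
    Set.Countable
      {c : ℂ | 0 < m {x : X |
        (1 + ∑ i : Fin N, a i x * c ^ ((i : ℕ) + 1)) /
          (1 + ∑ i : Fin N, b i x * c ^ ((i : ℕ) + 1)) = 0}} := by
  have hmeas (c : ℂ) : MeasurableSet {x : X |
      (1 + ∑ i : Fin N, a i x * c ^ ((i : ℕ) + 1)) /
        (1 + ∑ i : Fin N, b i x * c ^ ((i : ℕ) + 1)) = 0} :=
    (by fun_prop : Measurable _) (measurableSet_singleton 0)
  refine Measure.countable_meas_pos_of_encard_le (M := N + N) hmeas fun x => ?_
  let p := oneAddMonomials (a · x)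
  let q := oneAddMonomials (b · x)
  calc _ = {c | p.eval c / q.eval c = 0}.encard := by simp [p, q]
    _ ≤ (p.natDegree + q.natDegree : ℕ) :=
      encard_setOf_eval_div_eval_eq_zero_le (oneAddMonomials_ne_zero _) (oneAddMonomials_ne_zero _)
    _ ≤ (N + N : ℕ) := by
      gcongr <;> exact natDegree_oneAddMonomials_le _
end

section
/- Fix p ∈ 𝒩 and λ ∈ ℝ, and let E ∈ ℝ be such that the boundary value G^ω_{p,p}(E±i0) = lim_{ε↓0} G^ω_{p,p}(E±iε) exists. Let f : (0,∞) → ℂ satisfy lim_{ε↓0} f(ε) = 0 and suppose the limit T := lim_{ε↓0} f(ε) C_p G^{ω,λ}_{p,p,p}(E±iε) C_p exists. Then range(T) ⊆ ker(C_p^{-1} + λ G^ω_{p,p}(E±i0)) ⊆ ker(Im G^ω_{p,p}(E±i0)), where C_p^{-1} denotes the inverse of C_p on P_p𝓗. -/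
/-!
Write `G(z) = P (A - z)⁻¹ P` and `Gλ(z) = P (A + λC - z)⁻¹ P`. The second resolvent identity gives
`(C⁻¹ + λ G(z)) · C Gλ(z) C = G(z) C` off the real axis; multiplying by `f(ε) → 0` at
`z = E ± iε` and letting `ε ↓ 0` gives `(C⁻¹ + λ G(E ± i0)) T = 0`.

Since `Im ⟪x, (A - z)⁻¹ x⟫ = Im z · ‖(A - z)⁻¹ x‖²`, the operator `± Im G(E ± iε)` is positive,
hence so is its limit `± Im G(E ± i0)`. If `(C⁻¹ + λ G(E ± i0)) φ = 0`, then `⟪φ, G(E ± i0) φ⟫`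
is real because `⟪φ, C⁻¹ φ⟫ = ⟪C C⁻¹ φ, C⁻¹ φ⟫` is, and a positive operator whose quadratic form
vanishes at `φ` annihilates `φ`.
-/

open Filter Topology
open scoped InnerProductSpace

noncomputable section

variable {H : Type*} [NormedAddCommGroup H] [InnerProductSpace ℂ H] [CompleteSpace H]

def imPart (T : H →L[ℂ] H) : H →L[ℂ] H :=
  ((2 : ℂ) * Complex.I)⁻¹ • (T - ContinuousLinearMap.adjoint T)

/-- `hres` is the second resolvent identity for `R₁ = (A - z)⁻¹` and `R₂ = (A + λC - z)⁻¹`. -/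
theorem add_smul_mul_sandwich_eq {S : Type*} [Ring S] [Module ℝ S] [SMulCommClass ℝ S S]
    [IsScalarTower ℝ S S] {P C Ci R₁ R₂ : S} {lam : ℝ} (hPC : P * C = C) (hCP : C * P = C)
    (hCiC : Ci * C = P) (hres : R₁ - R₂ = R₁ * (lam • C) * R₂) :
    (Ci + lam • (P * R₁ * P)) * (C * (P * R₂ * P) * C) = P * R₁ * P * C := by
  have hsand : C * (P * R₂ * P) * C = C * R₂ * C := by
    rw [← mul_assoc C, ← mul_assoc C, hCP, mul_assoc _ P C, hPC]
  calc (Ci + lam • (P * R₁ * P)) * (C * (P * R₂ * P) * C)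
      = Ci * C * R₂ * C + P * R₁ * (lam • (P * C)) * R₂ * C := by
        rw [hsand]
        simp only [add_mul, smul_mul_assoc, mul_smul_comm, mul_assoc]
    _ = P * (R₂ + (R₁ - R₂)) * C := by rw [hCiC, hPC, hres]; noncomm_ring
    _ = P * R₁ * P * C := by rw [add_sub_cancel, mul_assoc _ P, hPC]

namespace ContinuousLinearMap

theorem IsPositive.apply_eq_zero_of_re_inner_eq_zero {S : H →L[ℂ] H} (hS : S.IsPositive) {x : H}
    (hx : RCLike.re ⟪S x, x⟫_ℂ = 0) : S x = 0 := by
  obtain ⟨B, rfl⟩ :=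
    CStarAlgebra.nonneg_iff_eq_star_mul_self.mp ((nonneg_iff_isPositive S).mpr hS)
  have hB : B x = 0 := by
    change RCLike.re ⟪star B (B x), x⟫_ℂ = 0 at hx
    rw [star_eq_adjoint, adjoint_inner_left, inner_self_eq_norm_sq] at hx
    simpa using hx
  simp [hB]

end ContinuousLinearMap

open ContinuousLinearMap

theorem continuous_imPart : Continuous (imPart : (H →L[ℂ] H) → H →L[ℂ] H) := by
  unfold imPart
  simp only [← star_eq_adjoint]
  fun_prop

theorem isSelfAdjoint_imPart (T : H →L[ℂ] H) : IsSelfAdjoint (imPart T) := by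
  have h : star ((2 : ℂ) * Complex.I)⁻¹ = -((2 : ℂ) * Complex.I)⁻¹ := by simp [Complex.conj_I]
  rw [IsSelfAdjoint, imPart, star_smul, star_sub, ← star_eq_adjoint, star_star, h, neg_smul,
    ← smul_neg, neg_sub]

theorem re_inner_smul_imPart_apply (c : ℝ) (T : H →L[ℂ] H) (x : H) :
    RCLike.re ⟪(c • imPart T) x, x⟫_ℂ = c * (⟪x, T x⟫_ℂ).im := by
  rw [smul_apply, RCLike.real_smul_eq_coe_smul (K := ℂ), inner_smul_real_left, RCLike.smul_re,
    imPart, smul_apply, inner_smul_left, sub_apply, inner_sub_left, adjoint_inner_left,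
    ← inner_conj_symm (T x) x, ← neg_sub, Complex.sub_conj]
  simp [Complex.conj_I]

theorem imPart_apply_eq_zero_of_im_inner_eq_zero {L : H →L[ℂ] H} {c : ℝ} (hc : c ≠ 0)
    (hL : (c • imPart L).IsPositive) {φ : H} (hφ : (⟪φ, L φ⟫_ℂ).im = 0) : imPart L φ = 0 := by
  have h := hL.apply_eq_zero_of_re_inner_eq_zero (x := φ)
    (by rw [re_inner_smul_imPart_apply, hφ, mul_zero])
  rw [smul_apply] at h
  exact (smul_eq_zero.mp h).resolve_left hc

theorem im_inner_apply_eq_zero_of_add_smul_apply_eq_zero {C Ci L : H →L[ℂ] H}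
    (hC : IsSelfAdjoint C) {φ : H} (hφ : C (Ci φ) = φ) {lam : ℝ} (h : (Ci + lam • L) φ = 0) :
    (⟪φ, L φ⟫_ℂ).im = 0 := by
  rcases eq_or_ne lam 0 with rfl | hlam
  · rw [zero_smul, add_zero] at h
    rw [← hφ, h, map_zero, inner_zero_left, Complex.zero_im]
  · have hCi : (⟪Ci φ, C (Ci φ)⟫_ℂ).im = 0 := hC.isSymmetric.im_inner_self_apply (Ci φ)
    rw [hφ] at hCi
    have hsum := congr((⟪φ, $h⟫_ℂ).im)
    rw [add_apply, smul_apply, inner_add_right, RCLike.real_smul_eq_coe_smul (K := ℂ),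
      inner_smul_real_right, ← inner_conj_symm, Complex.add_im, Complex.conj_im, hCi] at hsum
    simpa [hlam] using hsum

namespace IsSelfAdjoint

variable {T : H →L[ℂ] H}

theorem isUnit_sub_smul_one (hT : IsSelfAdjoint T) {z : ℂ} (hz : z.im ≠ 0) :
    IsUnit (T - z • (1 : H →L[ℂ] H)) := by
  have hz' : z ∉ spectrum ℂ T := fun h => hz (by rw [hT.mem_spectrum_eq_re h]; simp)
  simpa [Algebra.algebraMap_eq_smul_one] using (spectrum.notMem_iff.mp hz').neg

theorem im_inner_sub_smul_one_apply (hT : IsSelfAdjoint T) (z : ℂ) (u : H) :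
    (⟪u, (T - z • (1 : H →L[ℂ] H)) u⟫_ℂ).im = -(z.im * ‖u‖ ^ 2) := by
  have hTu : (⟪u, T u⟫_ℂ).im = 0 := hT.isSymmetric.im_inner_self_apply u
  rw [sub_apply, inner_sub_right, Complex.sub_im, hTu, smul_apply, one_apply_eq_self,
    inner_smul_right, inner_self_eq_norm_sq_to_K]
  simp [Complex.mul_im, ← Complex.ofReal_pow]

theorem im_inner_resolvent_apply (hT : IsSelfAdjoint T) {z : ℂ} (hz : z.im ≠ 0) (x : H) :
    (⟪x, Ring.inverse (T - z • (1 : H →L[ℂ] H)) x⟫_ℂ).im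
      = z.im * ‖Ring.inverse (T - z • (1 : H →L[ℂ] H)) x‖ ^ 2 := by
  set u := Ring.inverse (T - z • (1 : H →L[ℂ] H)) x
  have hu : (T - z • (1 : H →L[ℂ] H)) u = x :=
    congr($(Ring.mul_inverse_cancel _ (hT.isUnit_sub_smul_one hz)) x)
  rw [← hu, ← inner_conj_symm, Complex.conj_im, hT.im_inner_sub_smul_one_apply, neg_neg]

end IsSelfAdjoint

def compressedResolvent (P T : H →L[ℂ] H) (z : ℂ) : H →L[ℂ] H :=
  P ∘L Ring.inverse (T - z • (1 : H →L[ℂ] H)) ∘L P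

theorem isPositive_smul_imPart_compressedResolvent {P T : H →L[ℂ] H} (hP : IsSelfAdjoint P)
    (hT : IsSelfAdjoint T) {z : ℂ} (hz : z.im ≠ 0) {c : ℝ} (hc : 0 ≤ c * z.im) :
    (c • imPart (compressedResolvent P T z)).IsPositive := by
  refine isPositive_def'.mpr ⟨(IsSelfAdjoint.all c).smul (isSelfAdjoint_imPart _), fun x => ?_⟩
  have hPx : ∀ y, ⟪x, P y⟫_ℂ = ⟪P x, y⟫_ℂ := fun y => (hP.isSymmetric x y).symm
  rw [reApplyInnerSelf_apply, re_inner_smul_imPart_apply, compressedResolvent, comp_apply,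
    comp_apply, hPx, hT.im_inner_resolvent_apply hz, ← mul_assoc]
  positivity

theorem add_smul_compressedResolvent_mul_eq {P C Ci T : H →L[ℂ] H} (hT : IsSelfAdjoint T)
    (hC : IsSelfAdjoint C) (hPC : P ∘L C = C) (hCP : C ∘L P = C) (hCiC : Ci ∘L C = P) (lam : ℝ)
    {z : ℂ} (hz : z.im ≠ 0) :
    (Ci + lam • compressedResolvent P T z) * (C ∘L compressedResolvent P (T + lam • C) z ∘L C)
      = compressedResolvent P T z * C := by
  have hTC : IsSelfAdjoint (T + lam • C) := hT.add ((IsSelfAdjoint.all lam).smul hC)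
  have hres := Ring.inverse_sub_inverse (iff_of_true (hT.isUnit_sub_smul_one hz)
    (hTC.isUnit_sub_smul_one hz))
  rw [show T + lam • C - z • 1 - (T - z • 1) = lam • C by abel] at hres
  have := add_smul_mul_sandwich_eq hPC hCP hCiC hres
  simpa only [compressedResolvent, ← mul_def, mul_assoc] using this

theorem add_smul_mul_eq_zero_of_tendsto {α : Type*} {l : Filter α} [l.NeBot]
    {P C Ci T L T₀ : H →L[ℂ] H} {z f : α → ℂ} (hT : IsSelfAdjoint T) (hC : IsSelfAdjoint C)
    (hPC : P ∘L C = C) (hCP : C ∘L P = C) (hCiC : Ci ∘L C = P) (lam : ℝ)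
    (hz : ∀ᶠ a in l, (z a).im ≠ 0)
    (hL : Tendsto (fun a => compressedResolvent P T (z a)) l (𝓝 L)) (hf : Tendsto f l (𝓝 0))
    (hT₀ : Tendsto (fun a => f a • (C ∘L compressedResolvent P (T + lam • C) (z a) ∘L C)) l
      (𝓝 T₀)) :
    (Ci + lam • L) * T₀ = 0 := by
  have hlim := hf.smul (hL.mul_const C)
  rw [zero_smul] at hlim
  refine tendsto_nhds_unique (((tendsto_const_nhds.add (hL.const_smul lam)).mul hT₀).congr' ?_)
    hlim
  filter_upwards [hz] with a ha
  rw [mul_smul_comm, add_smul_compressedResolvent_mul_eq hT hC hPC hCP hCiC lam ha]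

theorem isPositive_smul_imPart_of_tendsto {α : Type*} {l : Filter α} [l.NeBot]
    {P T L : H →L[ℂ] H} {z : α → ℂ} {c : ℝ} (hP : IsSelfAdjoint P) (hT : IsSelfAdjoint T)
    (hz : ∀ᶠ a in l, (z a).im ≠ 0 ∧ 0 ≤ c * (z a).im)
    (hL : Tendsto (fun a => compressedResolvent P T (z a)) l (𝓝 L)) :
    (c • imPart L).IsPositive := by
  rw [← nonneg_iff_isPositive]
  refine isClosed_Ici.mem_of_tendsto (((continuous_imPart.tendsto L).comp hL).const_smul c) ?_
  filter_upwards [hz] with a ⟨ha, hc⟩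
  exact (nonneg_iff_isPositive _).mpr (isPositive_smul_imPart_compressedResolvent hP hT ha hc)

theorem range_subset_ker_subset_ker_im_general
    -- `T = A^ω`, essentially self-adjoint; here its (bounded) self-adjoint realisation
    (T : H →L[ℂ] H) (hT : IsSelfAdjoint T)
    {ι : Type*}
    (C : ι → H →L[ℂ] H) (hCpos : ∀ n, (C n).IsPositive)
    (P : ι → H →L[ℂ] H)
    (hPsa : ∀ n, IsSelfAdjoint (P n)) (hPidem : ∀ n, (P n) ∘L (P n) = P n)
    (hPrange : ∀ n, LinearMap.range ((P n : H →ₗ[ℂ] H)) = LinearMap.range ((C n : H →ₗ[ℂ] H)))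
    (p : ι) (lam : ℝ) (E : ℝ)
    -- the sign `±`
    (s : ℝ) (hs : s = 1 ∨ s = -1)
    -- `Cinv` is the inverse `C_p⁻¹` of `C_p` on `P_p𝓗`
    (Cinv : H →L[ℂ] H) (hCinv₁ : Cinv ∘L (C p) = P p) (hCinv₂ : (C p) ∘L Cinv = P p)
    -- the boundary value `L = G^ω_{p,p}(E ± i0)` exists
    (L : H →L[ℂ] H)
    (hL : Tendsto (fun ε : ℝ =>
        (P p) ∘L Ring.inverse (T - ((E : ℂ) + (s * ε) • Complex.I) • (1 : H →L[ℂ] H)) ∘L (P p))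
      (𝓝[>] 0) (𝓝 L))
    -- `f : (0,∞) → ℂ` tends to `0` at `0⁺`
    (f : ℝ → ℂ) (hf : Tendsto f (𝓝[>] 0) (𝓝 0))
    -- the limit `T₀ = lim_{ε↓0} f(ε) C_p G^{ω,λ}_{p,p,p}(E ± iε) C_p` exists,
    -- where `G^{ω,λ}_{p,p,p}(z) = P_p (A^ω + λ C_p - z)⁻¹ P_p`
    (T₀ : H →L[ℂ] H)
    (hT₀ : Tendsto (fun ε : ℝ =>
        f ε • ((C p) ∘L
          ((P p) ∘L Ring.inverse ((T + lam • C p)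
              - ((E : ℂ) + (s * ε) • Complex.I) • (1 : H →L[ℂ] H)) ∘L (P p))
          ∘L (C p)))
      (𝓝[>] 0) (𝓝 T₀)) :
    (∀ y : H, (Cinv + lam • L) (T₀ y) = 0) ∧
    (∀ φ ∈ LinearMap.range ((P p : H →ₗ[ℂ] H)),
      (Cinv + lam • L) φ = 0 → imPart L φ = 0) := by
  set z : ℝ → ℂ := fun ε => (E : ℂ) + (s * ε) • Complex.I
  have hs0 : s ≠ 0 := by rcases hs with rfl | rfl <;> norm_num
  have hz : ∀ᶠ ε in 𝓝[>] (0 : ℝ), (z ε).im ≠ 0 ∧ 0 ≤ s * (z ε).im := by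
    filter_upwards [self_mem_nhdsWithin] with ε (hε : 0 < ε)
    have him : (z ε).im = s * ε := by simp [z]
    rw [him, ← mul_assoc]
    exact ⟨mul_ne_zero hs0 hε.ne', mul_nonneg (mul_self_nonneg s) hε.le⟩
  have hPC : P p ∘L C p = C p := coe_injective <|
    (LinearMap.IsIdempotentElem.comp_eq_right_iff (congrArg toLinearMap (hPidem p)) _).mpr
      (hPrange p).ge
  have hCP : C p ∘L P p = C p := by rw [← hCinv₁, ← comp_assoc, hCinv₂, hPC]
  have hker : (Cinv + lam • L) * T₀ = 0 := add_smul_mul_eq_zero_of_tendsto hT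
    (hCpos p).isSelfAdjoint hPC hCP hCinv₁ lam (hz.mono fun _ => And.left) hL hf hT₀
  have hpos : (s • imPart L).IsPositive := isPositive_smul_imPart_of_tendsto (hPsa p) hT hz hL
  refine ⟨fun y => by simpa using congr($hker y), ?_⟩
  rintro _ ⟨y, rfl⟩ hφ
  refine imPart_apply_eq_zero_of_im_inner_eq_zero hs0 hpos
    (im_inner_apply_eq_zero_of_add_smul_apply_eq_zero (hCpos p).isSelfAdjoint ?_ hφ)
  exact congr($hCinv₂ (P p y)).trans congr($(hPidem p) y)

/-- Fix `p`, `λ` and `E ∈ ℝ` such that `G^ω_{p,p}(E ± i0)` exists.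
Let `f : (0,∞) → ℂ` with `f(ε) → 0` as `ε ↓ 0`, and suppose
`T₀ = lim_{ε↓0} f(ε) C_p G^{ω,λ}_{p,p,p}(E ± iε) C_p` exists.  Then
`range T₀ ⊆ ker (C_p⁻¹ + λ G^ω_{p,p}(E ± i0)) ⊆ ker (Im G^ω_{p,p}(E ± i0))`,
where `C_p⁻¹` is the inverse of `C_p` on `P_p𝓗`.
(The sign `s = 1` gives the `+` case and `s = -1` the `-` case.) -/
theorem range_subset_ker_subset_ker_im
    -- `T = A^ω`, essentially self-adjoint; here its (bounded) self-adjoint realisation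
    (T : H →L[ℂ] H) (hT : IsSelfAdjoint T)
    {ι : Type*} [Countable ι]
    (C : ι → H →L[ℂ] H) (hCpos : ∀ n, (C n).IsPositive)
    (hCfin : ∀ n, FiniteDimensional ℂ (LinearMap.range ((C n : H →ₗ[ℂ] H))))
    (P : ι → H →L[ℂ] H)
    (hPsa : ∀ n, IsSelfAdjoint (P n)) (hPidem : ∀ n, (P n) ∘L (P n) = P n)
    (hPrange : ∀ n, LinearMap.range ((P n : H →ₗ[ℂ] H)) = LinearMap.range ((C n : H →ₗ[ℂ] H)))
    (p : ι) (lam : ℝ) (E : ℝ)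
    -- the sign `±`
    (s : ℝ) (hs : s = 1 ∨ s = -1)
    -- `Cinv` is the inverse `C_p⁻¹` of `C_p` on `P_p𝓗`
    (Cinv : H →L[ℂ] H) (hCinv₁ : Cinv ∘L (C p) = P p) (hCinv₂ : (C p) ∘L Cinv = P p)
    -- the boundary value `L = G^ω_{p,p}(E ± i0)` exists
    (L : H →L[ℂ] H)
    (hL : Tendsto (fun ε : ℝ =>
        (P p) ∘L Ring.inverse (T - ((E : ℂ) + (s * ε) • Complex.I) • (1 : H →L[ℂ] H)) ∘L (P p))
      (𝓝[>] 0) (𝓝 L))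
    -- `f : (0,∞) → ℂ` tends to `0` at `0⁺`
    (f : ℝ → ℂ) (hf : Tendsto f (𝓝[>] 0) (𝓝 0))
    -- the limit `T₀ = lim_{ε↓0} f(ε) C_p G^{ω,λ}_{p,p,p}(E ± iε) C_p` exists,
    -- where `G^{ω,λ}_{p,p,p}(z) = P_p (A^ω + λ C_p - z)⁻¹ P_p`
    (T₀ : H →L[ℂ] H)
    (hT₀ : Tendsto (fun ε : ℝ =>
        f ε • ((C p) ∘L
          ((P p) ∘L Ring.inverse ((T + lam • C p)
              - ((E : ℂ) + (s * ε) • Complex.I) • (1 : H →L[ℂ] H)) ∘L (P p))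
          ∘L (C p)))
      (𝓝[>] 0) (𝓝 T₀)) :
    (∀ y : H, (Cinv + lam • L) (T₀ y) = 0) ∧
    (∀ φ ∈ LinearMap.range ((P p : H →ₗ[ℂ] H)),
      (Cinv + lam • L) φ = 0 → imPart L φ = 0) :=
  range_subset_ker_subset_ker_im_general T hT C hCpos P hPsa hPidem hPrange p lam E s hs Cinv hCinv₁
    hCinv₂ L hL f hf T₀ hT₀
end
end
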